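/- arXiv:1805.00091 — 2 statements merged into one kernel-verified Lean document; each statement's English description precedes it below -/
import Mathlib

section
/- Let p > 2 be a prime, n ≥ 4, and let G = G_{n−1} be Ito's group on generators a_1, …, a_n. Let m be an integer with 2 ≤ m ≤ ⌊n/2⌋ and let i_1, …, i_m be integers with i_k ≢ 0 (mod p) for all k = 1, …, m. Then there exist no x, y ∈ G such that [x, y] = [a_1,a_2]^{i_1}·[a_3,a_4]^{i_2}·⋯·[a_{2m−1},a_{2m}]^{i_m}. -/
open scoped Classical

namespace Paper

/-- The commutator `[x,y] = x⁻¹y⁻¹xy`. -/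
def comm {G : Type*} [Group G] (x y : G) : G := x⁻¹ * y⁻¹ * x * y

/-- `K(G)`, the set of commutators in `G`. -/
def KG (G : Type*) [Group G] : Set G := {g : G | ∃ x y : G, comm x y = g}

/-- The fiber of `g` under the commutator word map. -/
def fiber {G : Type*} [Group G] (g : G) : Set (G × G) := {q : G × G | comm q.1 q.2 = g}

/-- `Pr_g(G) = |fiber(g)| / |G|²`. -/
noncomputable def Pr (G : Type*) [Group G] (g : G) : ℚ :=
  (Nat.card (fiber g) : ℚ) / ((Nat.card G : ℚ)) ^ 2

/-- `P(G) = {Pr_g(G) : g ∈ K(G), g ≠ 1}`. -/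
noncomputable def PSet (G : Type*) [Group G] : Set ℚ :=
  {q : ℚ | ∃ g ∈ KG G, g ≠ 1 ∧ Pr G g = q}

/-- The conjugacy class `g^G` of `g` in `G`. -/
def conjClass {G : Type*} [Group G] (g : G) : Set G := {h : G | ∃ x : G, x⁻¹ * g * x = h}

/-- `G` is of conjugate type `(1, m)`: every noncentral element has conjugacy
class of size exactly `m`. -/
def IsConjugateType1 (G : Type*) [Group G] (m : ℕ) : Prop :=
  ∀ g : G, g ∉ Subgroup.center G → Nat.card (conjClass g) = m

/-- `TZ_g = {xZ(G) ∈ G/Z(G) : g ∈ [x,G]}`. -/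
def TZ (G : Type*) [Group G] (g : G) : Set (G ⧸ Subgroup.center G) :=
  {xz : G ⧸ Subgroup.center G |
    ∃ x : G, (QuotientGroup.mk x : G ⧸ Subgroup.center G) = xz ∧ ∃ h : G, comm x h = g}




/-- The relations of Ito's group `G_r`: the commutators are central,
and the generators and their commutators have order dividing `p`. -/
def itoRels (p r : ℕ) : Set (FreeGroup (Fin (r + 1))) :=
  {w : FreeGroup (Fin (r + 1)) |
    (∃ i j k : Fin (r + 1), i < j ∧
      w = comm (FreeGroup.of k) (comm (FreeGroup.of i) (FreeGroup.of j))) ∨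
    (∃ i : Fin (r + 1), w = (FreeGroup.of i) ^ p) ∨
    (∃ i j : Fin (r + 1), i < j ∧ w = (comm (FreeGroup.of i) (FreeGroup.of j)) ^ p)}

/-- Ito's group `G_r`, presented on `r+1` generators. -/
abbrev ItoGroup (p r : ℕ) : Type := PresentedGroup (itoRels p r)

/-- The generators `a_1, …, a_{r+1}` of Ito's group (0-indexed). -/
def itoGen (p r : ℕ) (i : Fin (r + 1)) : ItoGroup p r := PresentedGroup.of i


@[ext] structure Model (p d : ℕ) where
  v : Fin d → ZMod p
  c : Fin d → Fin d → ZMod p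

namespace Model

variable {p d : ℕ}

instance : Mul (Model p d) :=
  ⟨fun x y => ⟨x.v + y.v, fun i j => x.c i j + y.c i j + x.v i * y.v j⟩⟩
instance : One (Model p d) := ⟨⟨0, fun _ _ => 0⟩⟩
instance : Inv (Model p d) :=
  ⟨fun x => ⟨-x.v, fun i j => -x.c i j + x.v i * x.v j⟩⟩

@[simp] lemma mul_v (x y : Model p d) (i : Fin d) : (x * y).v i = x.v i + y.v i := rfl
@[simp] lemma mul_c (x y : Model p d) (i j : Fin d) :
    (x * y).c i j = x.c i j + y.c i j + x.v i * y.v j := rfl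
@[simp] lemma one_v (i : Fin d) : (1 : Model p d).v i = 0 := rfl
@[simp] lemma one_c (i j : Fin d) : (1 : Model p d).c i j = 0 := rfl
@[simp] lemma inv_v (x : Model p d) (i : Fin d) : (x⁻¹).v i = -x.v i := rfl
@[simp] lemma inv_c (x : Model p d) (i j : Fin d) :
    (x⁻¹).c i j = -x.c i j + x.v i * x.v j := rfl

instance : Group (Model p d) where
  mul_assoc a b c := by ext i j <;> simp <;> ring
  one_mul a := by ext <;> simp
  mul_one a := by ext <;> simp
  inv_mul_cancel a := by ext <;> simp

lemma mul_def (x y : Model p d) :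
    x * y = ⟨x.v + y.v, fun i j => x.c i j + y.c i j + x.v i * y.v j⟩ := rfl
lemma inv_def (x : Model p d) :
    x⁻¹ = ⟨-x.v, fun i j => -x.c i j + x.v i * x.v j⟩ := rfl
lemma one_def : (1 : Model p d) = ⟨0, fun _ _ => 0⟩ := rfl

lemma comm_eq (x y : Model p d) :
    comm x y = ⟨0, fun i j => x.v i * y.v j - y.v i * x.v j⟩ := by
  ext i j <;> simp [comm] <;> ring

lemma pow_eq (x : Model p d) (k : ℕ) :
    x ^ k = ⟨(k : ZMod p) • x.v,
      fun i j => (k : ZMod p) * x.c i j + (k.choose 2 : ZMod p) * (x.v i * x.v j)⟩ := by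
  induction k with
  | zero => ext <;> simp [one_def]
  | succ k ih =>
    rw [pow_succ, ih]
    ext i j <;> simp [Nat.choose_succ_succ, add_smul] <;> push_cast <;> ring

lemma zpow_central (c : Fin d → Fin d → ZMod p) (z : ℤ) :
    (⟨0, c⟩ : Model p d) ^ z = ⟨0, fun i j => (z : ZMod p) * c i j⟩ := by
  rcases z with k | k
  · rw [Int.ofNat_eq_coe, zpow_natCast, pow_eq]
    ext <;> simp
  · rw [zpow_negSucc, pow_eq]
    ext i j <;> simp [Int.cast_negSucc] <;> push_cast <;> ring

lemma prod_ofFn {m : ℕ} (f : Fin m → (Fin d → Fin d → ZMod p)) :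
    (List.ofFn (fun k => (⟨0, f k⟩ : Model p d))).prod =
      ⟨0, fun i j => ∑ k, f k i j⟩ := by
  induction m with
  | zero => ext <;> simp [one_def]
  | succ m ih =>
    rw [List.ofFn_succ, List.prod_cons, ih]
    ext i j <;> simp [Fin.sum_univ_succ]

end Model

lemma map_comm {G H : Type*} [Group G] [Group H] (φ : G →* H) (x y : G) :
    φ (comm x y) = comm (φ x) (φ y) := by simp [comm]

def gen (p d : ℕ) (i : Fin d) : Model p d := ⟨Pi.single i 1, fun _ _ => 0⟩

open Model in
lemma lift_rels (p : ℕ) (hp : p.Prime) (hp2 : 2 < p) (r : ℕ) :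
    ∀ w ∈ itoRels p r, FreeGroup.lift (gen p (r + 1)) w = 1 := by
  haveI : NeZero p := ⟨hp.ne_zero⟩
  have hch : ((p.choose 2 : ℕ) : ZMod p) = 0 := by
    rw [ZMod.natCast_eq_zero_iff]
    exact hp.dvd_choose_self (by norm_num) hp2
  rintro w (⟨i, j, k, hij, rfl⟩ | ⟨i, rfl⟩ | ⟨i, j, hij, rfl⟩)
  · rw [map_comm, map_comm, FreeGroup.lift_apply_of, FreeGroup.lift_apply_of, FreeGroup.lift_apply_of,
      comm_eq, comm_eq]
    ext a b <;> simp
  · rw [map_pow, FreeGroup.lift_apply_of, pow_eq]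
    ext a b <;> simp [gen, hch]
  · rw [map_pow, map_comm, FreeGroup.lift_apply_of, FreeGroup.lift_apply_of, comm_eq, pow_eq]
    ext a b <;> simp



lemma sum_zero {p m : ℕ} (i : Fin m → ℤ) (s t : ℕ)
    (h : ∀ k : ℕ, ¬(s = 2 * k ∧ t = 2 * k + 1) ∧ ¬(s = 2 * k + 1 ∧ t = 2 * k)) :
    (∑ k : Fin m, ((i k : ℤ) : ZMod p) *
        ((if s = 2 * (k : ℕ) then (1 : ZMod p) else 0) *
            (if t = 2 * (k : ℕ) + 1 then (1 : ZMod p) else 0) -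
          (if s = 2 * (k : ℕ) + 1 then (1 : ZMod p) else 0) *
            (if t = 2 * (k : ℕ) then (1 : ZMod p) else 0))) = 0 := by
  refine Finset.sum_eq_zero fun k _ => ?_
  obtain ⟨h1, h2⟩ := h (k : ℕ)
  split_ifs <;> first | ring1 | (exfalso; omega)

lemma sum_single {p m : ℕ} (i : Fin m → ℤ) (s t : ℕ) (k0 : Fin m)
    (hs : s = 2 * (k0 : ℕ)) (ht : t = 2 * (k0 : ℕ) + 1) :
    (∑ k : Fin m, ((i k : ℤ) : ZMod p) *
        ((if s = 2 * (k : ℕ) then (1 : ZMod p) else 0) *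
            (if t = 2 * (k : ℕ) + 1 then (1 : ZMod p) else 0) -
          (if s = 2 * (k : ℕ) + 1 then (1 : ZMod p) else 0) *
            (if t = 2 * (k : ℕ) then (1 : ZMod p) else 0))) = ((i k0 : ℤ) : ZMod p) := by
  rw [Finset.sum_eq_single_of_mem k0 (Finset.mem_univ _)]
  · rw [if_pos hs, if_pos ht, if_neg (by omega), if_neg (by omega)]
    ring
  · intro k _ hk
    have hk' : (k : ℕ) ≠ (k0 : ℕ) := fun h => hk (Fin.ext h)
    split_ifs <;> first | ring1 | (exfalso; omega)


/-- in Ito's group `G_{n-1}` (on `n` generators, `n ≥ 4`), no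
single commutator equals `[a_1,a_2]^{i_1}⋯[a_{2m-1},a_{2m}]^{i_m}` when
`2 ≤ m ≤ ⌊n/2⌋` and all `i_k` are nonzero mod `p`. -/
theorem stmt10 (p n : ℕ) (hp : p.Prime) (hp2 : 2 < p) (hn : 4 ≤ n)
    (m : ℕ) (hm : 2 ≤ m) (hm2 : m ≤ n / 2)
    (i : Fin m → ℤ) (hi : ∀ k : Fin m, ¬ ((p : ℤ) ∣ i k)) :
    ¬ ∃ x y : ItoGroup p (n - 1),
      comm x y =
        (List.ofFn (fun k : Fin m =>
          (comm (itoGen p (n - 1) ⟨2 * k.1, by have := k.2; omega⟩)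
                (itoGen p (n - 1) ⟨2 * k.1 + 1, by have := k.2; omega⟩)) ^ (i k))).prod := by
  haveI : NeZero p := ⟨hp.ne_zero⟩
  haveI := Fact.mk hp
  rintro ⟨x, y, hxy⟩
  let φ : ItoGroup p (n - 1) →* Model p (n - 1 + 1) :=
    PresentedGroup.toGroup (lift_rels p hp hp2 (n - 1))
  have hgen : ∀ a : Fin (n - 1 + 1), φ (itoGen p (n - 1) a) = gen p (n - 1 + 1) a :=
    fun a => PresentedGroup.toGroup.of (lift_rels p hp hp2 (n - 1))
  set D : Fin m → Fin (n - 1 + 1) → Fin (n - 1 + 1) → ZMod p := fun k a b =>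
    ((i k : ℤ) : ZMod p) *
      ((if (a : ℕ) = 2 * (k : ℕ) then (1 : ZMod p) else 0) *
          (if (b : ℕ) = 2 * (k : ℕ) + 1 then (1 : ZMod p) else 0) -
        (if (a : ℕ) = 2 * (k : ℕ) + 1 then (1 : ZMod p) else 0) *
          (if (b : ℕ) = 2 * (k : ℕ) then (1 : ZMod p) else 0)) with hD
  have hfun : (⇑φ ∘ fun k : Fin m =>
      (comm (itoGen p (n - 1) ⟨2 * k.1, by have := k.2; omega⟩)
            (itoGen p (n - 1) ⟨2 * k.1 + 1, by have := k.2; omega⟩)) ^ (i k)) =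
      fun k : Fin m => (⟨0, D k⟩ : Model p (n - 1 + 1)) := by
    funext k
    simp only [Function.comp_apply, map_zpow, map_comm, hgen]
    rw [Model.comm_eq, Model.zpow_central]
    ext a b
    · rfl
    · simp only [hD, gen, Pi.single_apply, Fin.ext_iff, Fin.val_mk]
  have h := congrArg φ hxy
  rw [map_comm, map_list_prod, List.map_ofFn, hfun, Model.prod_ofFn,
    Model.comm_eq] at h
  have hc := congrArg Model.c h
  set u := (φ x).v with hu
  set w := (φ y).v with hw
  have e01 := congrFun (congrFun hc ⟨0, by omega⟩) ⟨1, by omega⟩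
  have e23 := congrFun (congrFun hc ⟨2, by omega⟩) ⟨3, by omega⟩
  have e02 := congrFun (congrFun hc ⟨0, by omega⟩) ⟨2, by omega⟩
  have e03 := congrFun (congrFun hc ⟨0, by omega⟩) ⟨3, by omega⟩
  have e12 := congrFun (congrFun hc ⟨1, by omega⟩) ⟨2, by omega⟩
  have e13 := congrFun (congrFun hc ⟨1, by omega⟩) ⟨3, by omega⟩
  simp only [hD, Fin.val_mk] at e01 e23 e02 e03 e12 e13
  rw [sum_single i 0 1 ⟨0, by omega⟩ (by norm_num) (by norm_num)] at e01
  rw [sum_single i 2 3 ⟨1, by omega⟩ (by norm_num) (by norm_num)] at e23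
  rw [sum_zero i 0 2 (fun k => by omega)] at e02
  rw [sum_zero i 0 3 (fun k => by omega)] at e03
  rw [sum_zero i 1 2 (fun k => by omega)] at e12
  rw [sum_zero i 1 3 (fun k => by omega)] at e13
  have hk0 : ((i ⟨0, by omega⟩ : ℤ) : ZMod p) ≠ 0 := fun hz =>
    hi _ ((ZMod.intCast_zmod_eq_zero_iff_dvd _ _).mp hz)
  have hk1 : ((i ⟨1, by omega⟩ : ℤ) : ZMod p) ≠ 0 := fun hz =>
    hi _ ((ZMod.intCast_zmod_eq_zero_iff_dvd _ _).mp hz)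
  have hc2 : ((i ⟨0, by omega⟩ : ℤ) : ZMod p) * u ⟨2, by omega⟩ = 0 := by
    linear_combination (-(u ⟨2, by omega⟩)) * e01 + (u ⟨1, by omega⟩) * e02 -
      (u ⟨0, by omega⟩) * e12
  have hc3 : ((i ⟨0, by omega⟩ : ℤ) : ZMod p) * u ⟨3, by omega⟩ = 0 := by
    linear_combination (-(u ⟨3, by omega⟩)) * e01 + (u ⟨1, by omega⟩) * e03 -
      (u ⟨0, by omega⟩) * e13
  have hu2 : u ⟨2, by omega⟩ = 0 := by
    rcases mul_eq_zero.mp hc2 with h' | h'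
    · exact absurd h' hk0
    · exact h'
  have hu3 : u ⟨3, by omega⟩ = 0 := by
    rcases mul_eq_zero.mp hc3 with h' | h'
    · exact absurd h' hk0
    · exact h'
  apply hk1
  rw [← e23, hu2, hu3]
  ring


end Paper
end

section
/- Let p be a prime, n ≥ 1, and let G be a stem finite p-group of nilpotency class 3 and of conjugate type (1, p^{2n}), equipped with a generating set a_1, …, a_n, b_1, …, b_n satisfying properties (i)–(v) listed in the context. Then for every h ∈ G' \ Z(G) and every a ∈ A, b ∈ B with ab ≠ 1, there exists h* ∈ G' such that h ∈ [a·b·h*, G], where [x, G] = {[x,y] : y ∈ G}. -/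
open scoped Classical

namespace Paper

/-- The ordered product `a_1^{k_1} ⋯ a_n^{k_n}`. -/
def prodPow {G : Type*} [Group G] {n : ℕ} (a : Fin n → G) (k : Fin n → ℕ) : G :=
  (List.ofFn fun i => a i ^ k i).prod

/-- The set `{a_1^{k_1} ⋯ a_n^{k_n} : 0 ≤ k_i ≤ p − 1}`. -/
def powerProducts {G : Type*} [Group G] {n : ℕ} (p : ℕ) (a : Fin n → G) : Set G :=
  {x : G | ∃ k : Fin n → ℕ, (∀ i, k i ≤ p - 1) ∧ x = prodPow a k}

/-- `[x, S] = {[x,s] : s ∈ S}`. -/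
def commSet {G : Type*} [Group G] (x : G) (S : Set G) : Set G :=
  {g : G | ∃ s ∈ S, comm x s = g}

/-!
Put `g = ab`. In class 3 the subgroup `[G', G]` is central and `G'` is abelian, so for `w, w' ∈ G'`
we have `[g w', δ w] = [g, δ] [g, w] [w', δ]`. It therefore suffices to find `δ` with
`h ∈ [g, δ] Z(G)` and to write the remaining central factor as `[g, w] [w', δ]`; the latter is
possible because `Z(G) = Z₁ Z₂` with `Z₁ = [a, G']` and `Z₂ = [δ, G']` for `1 ≠ δ ∈ B` (the roles of
`A` and `B` are exchanged when `a = 1`).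

By (iv) there is `δ ∈ B` with `[[g, b₁], δ] = [h, b₁]`, so `u = [g, δ]⁻¹ h ∈ G'` commutes with `b₁`.
Such a `u` is central: otherwise `[u, B] = Z₂`, which has order `p^n` since `|Z(G)| = p^{2n}` by (v)
and the conjugate type, whereas `B` has at most `p^n` elements, two of which (`1` and `b₁`) have the
same image.
-/

section Commutators

open Subgroup
open scoped commutatorElement
variable {G : Type*} [Group G]

lemma comm_eq_commutatorElement (x y : G) : comm x y = ⁅x⁻¹, y⁻¹⁆ := by
  simp [comm, commutatorElement_def, mul_assoc]

lemma comm_mem_commutator (x y : G) : comm x y ∈ commutator G := by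
  rw [comm_eq_commutatorElement, commutator_def]
  exact commutator_mem_commutator (mem_top _) (mem_top _)

@[simp] lemma comm_one_left (x : G) : comm 1 x = 1 := by simp [comm]

@[simp] lemma comm_one_right (x : G) : comm x 1 = 1 := by simp [comm]

lemma comm_inv (x y : G) : (comm x y)⁻¹ = comm y x := by
  unfold comm; group

lemma comm_mul_left (x y g : G) : comm (x * y) g = comm x g * comm (comm x g) y * comm y g := by
  unfold comm; group

lemma comm_mul_right (x y g : G) : comm x (y * g) = comm x g * comm x y * comm (comm x y) g := by
  unfold comm; group

lemma comm_eq_one_of_mem_center {c : G} (hc : c ∈ center G) (g : G) : comm c g = 1 := by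
  simp [comm, (mem_center_iff.mp hc g).symm, mul_assoc]

lemma comm_eq_one_of_mem_center_right {c : G} (hc : c ∈ center G) (g : G) : comm g c = 1 := by
  rw [← comm_inv, comm_eq_one_of_mem_center hc, inv_one]

lemma comm_eq_one_iff {x y : G} : comm x y = 1 ↔ Commute x y := by
  rw [comm_eq_commutatorElement, commutatorElement_eq_one_iff_commute, Commute.inv_inv_iff]

lemma commSet_eq_image (x : G) (S : Set G) : commSet x S = comm x '' S := rfl

lemma conjClass_eq_image_commSet (g : G) : conjClass g = (g * ·) '' commSet g Set.univ := by
  ext t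
  constructor
  · rintro ⟨x, rfl⟩
    exact ⟨comm g x, ⟨x, trivial, rfl⟩, by unfold comm; group⟩
  · rintro ⟨_, ⟨x, -, rfl⟩, rfl⟩
    exact ⟨x, by unfold comm; group⟩

lemma card_conjClass_eq_card_commSet (g : G) :
    Nat.card (conjClass g) = Nat.card (commSet g Set.univ) := by
  rw [conjClass_eq_image_commSet, Nat.card_image_of_injective (mul_right_injective g)]

lemma normal_of_le_center {K : Subgroup G} (hK : K ≤ center G) : K.Normal :=
  ⟨fun k hk g => by rwa [mem_center_iff.mp (hK hk) g, mul_inv_cancel_right]⟩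

lemma card_sup_le_mul [Finite G] {H K : Subgroup G} (hK : K ≤ center G) :
    Nat.card (H ⊔ K : Subgroup G) ≤ Nat.card H * Nat.card K := by
  have := normal_of_le_center hK
  have h := Set.natCard_mul_le (s := (H : Set G)) (t := K)
  rwa [← mul_normal H K] at h

lemma exists_comm_mul_comm_eq {W₁ W₂ : Subgroup G} {g δ ζ : G}
    (hW : center G ≤ W₁ ⊔ W₂) (hW₂ : W₂ ≤ center G)
    (hg : ∀ z ∈ W₁, ∃ w ∈ commutator G, (comm g w)⁻¹ * z ∈ W₂)
    (hδ : (W₂ : Set G) ⊆ commSet δ (commutator G)) (hζ : ζ ∈ center G) :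
    ∃ w ∈ commutator G, ∃ w' ∈ commutator G, comm g w * comm w' δ = ζ := by
  have := normal_of_le_center hW₂
  obtain ⟨z₁, hz₁, z₂, hz₂, rfl⟩ := mem_sup_of_normal_right.mp (hW hζ)
  obtain ⟨w, hw, hwz⟩ := hg z₁ hz₁
  obtain ⟨w', hw', hw'z⟩ := hδ (inv_mem (mul_mem hwz hz₂))
  refine ⟨w, hw, w', hw', ?_⟩
  rw [← comm_inv δ w', hw'z]
  group

end Commutators

section PowerProducts

open Subgroup
variable {G : Type*} [Group G] {n p : ℕ}

lemma prodPow_zero (c : Fin n → G) : prodPow c 0 = 1 := by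
  simp [prodPow]

lemma prodPow_indicator_zero (hn : 1 ≤ n) (c : Fin n → G) :
    prodPow c (fun i => if (i : ℕ) = 0 then 1 else 0) = c ⟨0, hn⟩ := by
  obtain ⟨m, rfl⟩ : ∃ m, n = m + 1 := ⟨n - 1, by omega⟩
  simp [prodPow, List.ofFn_succ]

lemma one_mem_powerProducts (c : Fin n → G) : 1 ∈ powerProducts p c :=
  ⟨0, fun _ => Nat.zero_le _, (prodPow_zero c).symm⟩

lemma mem_powerProducts_zero (hp : 1 < p) (hn : 1 ≤ n) (c : Fin n → G) :
    c ⟨0, hn⟩ ∈ powerProducts p c :=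
  ⟨_, fun i => by split <;> omega, (prodPow_indicator_zero hn c).symm⟩

lemma powerProducts_eq_range (hp : 0 < p) (c : Fin n → G) :
    powerProducts p c = Set.range fun k : Fin n → Fin p => prodPow c fun i => k i := by
  ext x
  constructor
  · rintro ⟨k, hk, rfl⟩
    exact ⟨fun i => ⟨k i, by have := hk i; omega⟩, rfl⟩
  · rintro ⟨k, rfl⟩
    exact ⟨_, fun i => by have := (k i).isLt; omega, rfl⟩

lemma card_image_powerProducts_le {H : Type*} (hp : 0 < p) (f : G → H) (c : Fin n → G) :
    Nat.card (f '' powerProducts p c) ≤ p ^ n := by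
  rw [powerProducts_eq_range hp, ← Set.range_comp]
  exact (Finite.card_range_le _).trans_eq (by simp)

lemma card_range_lt_of_not_injective {α β : Type*} [Finite α] {f : α → β}
    (hf : ¬ Function.Injective f) : Nat.card (Set.range f) < Nat.card α := by
  refine (Finite.card_range_le f).lt_of_ne fun h => hf fun x y hxy => ?_
  exact (Set.rangeFactorization_surjective.bijective_of_nat_card_le h.ge).injective (Subtype.ext hxy)

lemma card_image_powerProducts_lt {H : Type*} (hp : 1 < p) (hn : 1 ≤ n) {f : G → H}
    {c : Fin n → G} (hf : f (c ⟨0, hn⟩) = f 1) : Nat.card (f '' powerProducts p c) < p ^ n := by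
  rw [powerProducts_eq_range (by omega), ← Set.range_comp]
  refine (card_range_lt_of_not_injective fun hinj => ?_).trans_eq (by simp)
  have h := @hinj (fun i => if (i : ℕ) = 0 then ⟨1, hp⟩ else ⟨0, by omega⟩) (fun _ => ⟨0, by omega⟩)
    (by simpa only [Function.comp_apply, apply_ite Fin.val, prodPow_indicator_zero hn, ← Pi.zero_def,
      prodPow_zero] using hf)
  simpa using congrFun h ⟨0, hn⟩

lemma mem_center_of_comm_eq_one [Finite G] (hp : 1 < p) (hn : 1 ≤ n)
    {d : Fin n → G} {W : Subgroup G} (hW : p ^ n ≤ Nat.card W)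
    (hdW : ∀ v ∈ commutator G, v ∉ center G → commSet v (powerProducts p d) = W) :
    ∀ u ∈ commutator G, comm u (d ⟨0, hn⟩) = 1 → u ∈ center G := by
  intro u hu hud
  by_contra huZ
  have h := card_image_powerProducts_lt hp hn (f := comm u) (hud.trans (comm_one_right u).symm)
  rw [← commSet_eq_image, hdW u hu huZ] at h
  simp only [SetLike.coe_sort_coe] at h
  omega

lemma card_eq_pow_of_commSet_powerProducts [Finite G] (hp : 0 < p) {a b : Fin n → G}
    {W₁ W₂ : Subgroup G} {h : G} (hW : center G = W₁ ⊔ W₂)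
    (hcard : Nat.card (center G) = p ^ (2 * n))
    (ha : commSet h (powerProducts p a) = W₁) (hb : commSet h (powerProducts p b) = W₂) :
    Nat.card W₁ = p ^ n ∧ Nat.card W₂ = p ^ n := by
  have h₁ := card_image_powerProducts_le hp (comm h) a
  have h₂ := card_image_powerProducts_le hp (comm h) b
  rw [← commSet_eq_image, ha, SetLike.coe_sort_coe] at h₁
  rw [← commSet_eq_image, hb, SetLike.coe_sort_coe] at h₂
  have hsup := card_sup_le_mul (H := W₁) (hW ▸ le_sup_right)
  rw [← hW, hcard, two_mul, pow_add] at hsup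
  have := pow_pos hp n
  constructor <;> nlinarith

end PowerProducts

section ClassThree

open Subgroup
open scoped commutatorElement
variable {G : Type*} [Group G] (hG : (⊤ : Subgroup G).lowerCentralSeries 3 = ⊥)
include hG

lemma comm_mem_center_of_mem_left {u : G} (hu : u ∈ commutator G) (g : G) :
    comm u g ∈ center G := by
  rw [mem_center_iff]
  intro g'
  have h : ⁅comm u g, g'⁆ ∈ (⊤ : Subgroup G).lowerCentralSeries 3 := by
    rw [Subgroup.lowerCentralSeries_succ, Subgroup.lowerCentralSeries_succ, top_lowerCentralSeries_one]
    refine commutator_mem_commutator ?_ (mem_top _)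
    rw [comm_eq_commutatorElement]
    exact commutator_mem_commutator (inv_mem hu) (mem_top _)
  rw [hG, mem_bot, commutatorElement_eq_one_iff_commute] at h
  exact h.eq.symm

lemma comm_mem_center_of_mem_right {u : G} (hu : u ∈ commutator G) (g : G) :
    comm g u ∈ center G := by
  rw [← comm_inv]
  exact inv_mem (comm_mem_center_of_mem_left hG hu g)

lemma commutator_commutator_self_eq_bot : ⁅commutator G, commutator G⁆ = (⊥ : Subgroup G) := by
  have h : ⁅⁅commutator G, (⊤ : Subgroup G)⁆, (⊤ : Subgroup G)⁆ = ⊥ := by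
    rwa [Subgroup.lowerCentralSeries_succ, Subgroup.lowerCentralSeries_succ,
      top_lowerCentralSeries_one] at hG
  nth_rewrite 1 [commutator_def]
  exact commutator_commutator_eq_bot_of_rotate (by rwa [commutator_comm (⊤ : Subgroup G)]) h

lemma comm_eq_one_of_mem_commutator {u v : G} (hu : u ∈ commutator G) (hv : v ∈ commutator G) :
    comm u v = 1 := by
  have h := commutator_mem_commutator (inv_mem hu) (inv_mem hv)
  rwa [commutator_commutator_self_eq_bot hG, mem_bot, ← comm_eq_commutatorElement] at h

lemma comm_mul_left_of_mem_right {w : G} (hw : w ∈ commutator G) (x y : G) :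
    comm (x * y) w = comm x w * comm y w := by
  rw [comm_mul_left, comm_eq_one_of_mem_center (comm_mem_center_of_mem_right hG hw x), mul_one]

lemma comm_inv_mul_left {v : G} (hv : v ∈ commutator G) (h g : G) :
    comm (v⁻¹ * h) g = (comm v g)⁻¹ * comm h g := by
  have hv' : comm v⁻¹ g = (comm v g)⁻¹ := by
    have h1 := comm_mul_left v v⁻¹ g
    rw [mul_inv_cancel, comm_one_left,
      comm_eq_one_of_mem_center (comm_mem_center_of_mem_left hG hv g), mul_one] at h1
    exact eq_inv_of_mul_eq_one_right h1.symm
  rw [comm_mul_left, comm_eq_one_of_mem_center (comm_mem_center_of_mem_left hG (inv_mem hv) g),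
    mul_one, hv']

lemma comm_mul_mem_center_iff {x y δ : G} (hy : comm y δ ∈ center G) :
    comm (x * y) δ ∈ center G ↔ comm x δ ∈ center G := by
  rw [comm_mul_left, mul_assoc,
    mul_mem_cancel_right (mul_mem (comm_mem_center_of_mem_left hG (comm_mem_commutator x δ) y) hy)]

lemma comm_comm_swap {x y z : G} (hyz : comm y z ∈ center G) :
    comm (comm x y) z = comm (comm x z) y := by
  have h : comm x (y * z) = comm x (z * y) := by
    rw [show y * z = z * y * comm y z by unfold comm; group, comm_mul_right,
      comm_eq_one_of_mem_center_right hyz, comm_eq_one_of_mem_center_right hyz, one_mul, mul_one]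
  have hxyz : Commute (comm x y) (comm x z) := comm_eq_one_iff.mp
    (comm_eq_one_of_mem_commutator hG (comm_mem_commutator x y) (comm_mem_commutator x z))
  rw [comm_mul_right, comm_mul_right, hxyz.eq] at h
  exact mul_left_cancel h

lemma comm_mul_mul_of_mem {g δ w w' : G} (hw : w ∈ commutator G) (hw' : w' ∈ commutator G) :
    comm (g * w') (δ * w) = comm g δ * (comm g w * comm w' δ) := by
  have hgw : comm (g * w') w = comm g w := by
    rw [comm_mul_left_of_mem_right hG hw, comm_eq_one_of_mem_commutator hG hw' hw, mul_one]
  have hgδ : comm (g * w') δ = comm g δ * comm w' δ := by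
    rw [comm_mul_left, comm_eq_one_of_mem_commutator hG (comm_mem_commutator g δ) hw', mul_one]
  rw [comm_mul_right, comm_eq_one_of_mem_commutator hG (comm_mem_commutator _ _) hw, mul_one, hgw,
    hgδ, ← mul_assoc, ← mem_center_iff.mp (comm_mem_center_of_mem_right hG hw g) (comm g δ),
    mul_assoc]

lemma exists_inv_comm_mul_mem_center {D : Set G} {W : Subgroup G} {d₁ g h : G} (hd₁ : d₁ ∈ D)
    (hDd₁ : ∀ δ ∈ D, comm δ d₁ ∈ center G)
    (hDW : ∀ v ∈ commutator G, v ∉ center G → commSet v D = W)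
    (hd₁Z : ∀ u ∈ commutator G, comm u d₁ = 1 → u ∈ center G)
    (hg : comm g d₁ ∉ center G) (hh : h ∈ commutator G) (hhZ : h ∉ center G) :
    ∃ δ ∈ D, (comm g δ)⁻¹ * h ∈ center G := by
  obtain ⟨δ, hδ, hδh⟩ : comm h d₁ ∈ commSet (comm g d₁) D := by
    rw [hDW _ (comm_mem_commutator g d₁) hg, ← hDW h hh hhZ]
    exact ⟨d₁, hd₁, rfl⟩
  refine ⟨δ, hδ, hd₁Z _ (mul_mem (inv_mem (comm_mem_commutator g δ)) hh) ?_⟩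
  rw [comm_inv_mul_left hG (comm_mem_commutator g δ), comm_comm_swap hG (hDd₁ δ hδ), hδh,
    inv_mul_cancel]

lemma exists_mem_commSet_of_forall_exists_comm_mul_comm_eq {g δ h : G}
    (hh : (comm g δ)⁻¹ * h ∈ center G)
    (hcover : ∀ ζ ∈ center G, ∃ w ∈ commutator G, ∃ w' ∈ commutator G, comm g w * comm w' δ = ζ) :
    ∃ hstar ∈ (commutator G : Set G), h ∈ commSet (g * hstar) Set.univ := by
  obtain ⟨w, hw, w', hw', hζ⟩ := hcover _ hh
  exact ⟨w', hw', δ * w, trivial, by rw [comm_mul_mul_of_mem hG hw hw', hζ, mul_inv_cancel_left]⟩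

lemma exists_mem_commSet_mul_mul {D : Set G} {W₁ W₂ : Subgroup G} {d₁ c e h : G}
    (hW : center G = W₁ ⊔ W₂) (hd₁ : d₁ ∈ D) (hDd₁ : ∀ δ ∈ D, comm δ d₁ ∈ center G)
    (hDW : ∀ v ∈ commutator G, v ∉ center G → commSet v D = W₂)
    (hd₁Z : ∀ u ∈ commutator G, comm u d₁ = 1 → u ∈ center G)
    (hD : ∀ δ ∈ D, δ ≠ 1 → commSet δ (commutator G) = W₂)
    (hcd₁ : comm c d₁ ∉ center G) (hc : commSet c (commutator G) = W₁) (he : e ∈ D)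
    (hh : h ∈ commutator G) (hhZ : h ∉ center G) :
    ∃ hstar ∈ (commutator G : Set G), h ∈ commSet (c * e * hstar) Set.univ := by
  have hg : comm (c * e) d₁ ∉ center G := by rwa [comm_mul_mem_center_iff hG (hDd₁ e he)]
  obtain ⟨δ, hδ, hδh⟩ := exists_inv_comm_mul_mem_center hG hd₁ hDd₁ hDW hd₁Z hg hh hhZ
  have hδ₁ : δ ≠ 1 := by
    rintro rfl
    simp only [comm_one_right, inv_one, one_mul] at hδh
    exact hhZ hδh
  refine exists_mem_commSet_of_forall_exists_comm_mul_comm_eq hG hδh fun ζ hζ =>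
    exists_comm_mul_comm_eq hW.le (hW ▸ le_sup_right) (fun z hz => ?_) (hD δ hδ hδ₁).superset hζ
  obtain ⟨w, hw, rfl⟩ := hc.superset hz
  refine ⟨w, hw, ?_⟩
  rw [comm_mul_left_of_mem_right hG hw, mul_inv_rev, inv_mul_cancel_right]
  refine inv_mem ?_
  rcases eq_or_ne e 1 with rfl | he₁
  · simp only [comm_one_left, one_mem]
  · exact (hD e he he₁).subset ⟨w, hw, rfl⟩

end ClassThree

theorem stmt15_general (p n : ℕ) (hp : p.Prime) (hn : 1 ≤ n)
    (G : Type*) [Group G] [Finite G]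
    (hclass : (⊤ : Subgroup G).lowerCentralSeries 3 = ⊥ ∧ (⊤ : Subgroup G).lowerCentralSeries 2 ≠ ⊥)
    (hct : IsConjugateType1 G (p ^ (2 * n)))
    (a b : Fin n → G)
    -- (ii)
    (hii : Subgroup.center G = Subgroup.closure
      (Set.range (fun i => comm (comm (a ⟨0, hn⟩) (b ⟨0, hn⟩)) (a i)) ∪
       Set.range (fun i => comm (comm (a ⟨0, hn⟩) (b ⟨0, hn⟩)) (b i))))
    -- (iii)(1)
    (hiii1a : ∀ x ∈ powerProducts p a, ∀ y ∈ powerProducts p a,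
      comm x y ∈ Subgroup.center G)
    (hiii1b : ∀ x ∈ powerProducts p b, ∀ y ∈ powerProducts p b,
      comm x y ∈ Subgroup.center G)
    -- (iii)(2)
    (hiii2 : ∀ x ∈ powerProducts p a, ∀ y ∈ powerProducts p b,
      x ≠ 1 → y ≠ 1 → comm x y ∉ Subgroup.center G)
    -- (iv)
    (hiv1 : ∀ h' ∈ (commutator G : Set G), h' ∉ Subgroup.center G →
      commSet h' (powerProducts p a) =
        (Subgroup.closure (Set.range (fun i => comm (comm (a ⟨0, hn⟩) (b ⟨0, hn⟩)) (a i))) : Set G) ∧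
      commSet h' (powerProducts p b) =
        (Subgroup.closure (Set.range (fun i => comm (comm (a ⟨0, hn⟩) (b ⟨0, hn⟩)) (b i))) : Set G))
    (hiv2 : ∀ x ∈ powerProducts p a, x ≠ 1 → commSet x (commutator G : Set G) =
      (Subgroup.closure (Set.range (fun i => comm (comm (a ⟨0, hn⟩) (b ⟨0, hn⟩)) (a i))) : Set G))
    (hiv3 : ∀ y ∈ powerProducts p b, y ≠ 1 → commSet y (commutator G : Set G) =
      (Subgroup.closure (Set.range (fun i => comm (comm (a ⟨0, hn⟩) (b ⟨0, hn⟩)) (b i))) : Set G))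
    -- (v)
    (hv : ∀ h' ∈ (commutator G : Set G), h' ∉ Subgroup.center G →
      commSet h' Set.univ = (Subgroup.center G : Set G)) :
    ∀ h' ∈ (commutator G : Set G), h' ∉ Subgroup.center G →
      ∀ x ∈ powerProducts p a, ∀ y ∈ powerProducts p b, x * y ≠ 1 →
        ∃ hstar ∈ (commutator G : Set G), h' ∈ commSet (x * y * hstar) Set.univ := by
  intro h hh hhZ x hx y hy hxy
  set a₁ := a ⟨0, hn⟩
  set b₁ := b ⟨0, hn⟩
  have hZ := hii.trans (Subgroup.closure_union _ _)
  have hcard : Nat.card (Subgroup.center G) = p ^ (2 * n) := by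
    rw [← hct h hhZ, card_conjClass_eq_card_commSet, hv h hh hhZ]
    rfl
  obtain ⟨hZ₁, hZ₂⟩ :=
    card_eq_pow_of_commSet_powerProducts hp.pos hZ hcard (hiv1 h hh hhZ).1 (hiv1 h hh hhZ).2
  have hab : comm a₁ b₁ ≠ 1 := by
    intro h1
    rw [hii, h1, Subgroup.closure_eq_bot_iff.mpr (by simp), Subgroup.card_bot] at hcard
    exact (Nat.one_lt_pow (by omega) hp.one_lt).ne hcard
  obtain ⟨ha₁, hb₁⟩ : a₁ ≠ 1 ∧ b₁ ≠ 1 := by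
    constructor <;> rintro h1 <;> simp [h1] at hab
  have ha₁A := mem_powerProducts_zero hp.one_lt hn a
  have hb₁B := mem_powerProducts_zero hp.one_lt hn b
  rcases eq_or_ne x 1 with rfl | hx₁
  · have hy₁ : y ≠ 1 := by simpa using hxy
    simpa using exists_mem_commSet_mul_mul hclass.1 (hZ.trans (sup_comm _ _)) ha₁A
      (hiii1a · · a₁ ha₁A) (fun v hv hvZ => (hiv1 v hv hvZ).1)
      (mem_center_of_comm_eq_one hp.one_lt hn hZ₁.ge fun v hv hvZ => (hiv1 v hv hvZ).1)
      hiv2 (by rw [← comm_inv, inv_mem_iff]; exact hiii2 a₁ ha₁A y hy ha₁ hy₁) (hiv3 y hy hy₁)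
      (one_mem_powerProducts a) hh hhZ
  · exact exists_mem_commSet_mul_mul hclass.1 hZ hb₁B (hiii1b · · b₁ hb₁B)
      (fun v hv hvZ => (hiv1 v hv hvZ).2)
      (mem_center_of_comm_eq_one hp.one_lt hn hZ₂.ge fun v hv hvZ => (hiv1 v hv hvZ).2)
      hiv3 (hiii2 x hx b₁ hb₁B hx₁ hb₁) (hiv2 x hx hx₁) hy hh hhZ

/-- given a generating set `a_1, …, a_n, b_1, …, b_n` of a stem
finite `p`-group of class 3 and conjugate type `(1, p^{2n})` satisfying
properties (i)–(v), for every `h ∈ G' \ Z(G)` and every `a ∈ A`, `b ∈ B` with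
`ab ≠ 1`, there is `h* ∈ G'` with `h ∈ [a·b·h*, G]`. -/
theorem stmt15 (p n : ℕ) (hp : p.Prime) (hn : 1 ≤ n)
    (G : Type*) [Group G] [Finite G] (hG : IsPGroup p G)
    (hstem : Subgroup.center G ≤ commutator G)
    (hclass : (⊤ : Subgroup G).lowerCentralSeries 3 = ⊥ ∧ (⊤ : Subgroup G).lowerCentralSeries 2 ≠ ⊥)
    (hct : IsConjugateType1 G (p ^ (2 * n)))
    (a b : Fin n → G)
    (hgen : Subgroup.closure (Set.range a ∪ Set.range b) = ⊤)
    -- (i)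
    (hi : commutator G = Subgroup.closure
      (Set.range (fun i => comm (a ⟨0, hn⟩) (b i)) ∪ (Subgroup.center G : Set G)))
    -- (ii)
    (hii : Subgroup.center G = Subgroup.closure
      (Set.range (fun i => comm (comm (a ⟨0, hn⟩) (b ⟨0, hn⟩)) (a i)) ∪
       Set.range (fun i => comm (comm (a ⟨0, hn⟩) (b ⟨0, hn⟩)) (b i))))
    -- (iii)(1)
    (hiii1a : ∀ x ∈ powerProducts p a, ∀ y ∈ powerProducts p a,
      comm x y ∈ Subgroup.center G)
    (hiii1b : ∀ x ∈ powerProducts p b, ∀ y ∈ powerProducts p b,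
      comm x y ∈ Subgroup.center G)
    -- (iii)(2)
    (hiii2 : ∀ x ∈ powerProducts p a, ∀ y ∈ powerProducts p b,
      x ≠ 1 → y ≠ 1 → comm x y ∉ Subgroup.center G)
    -- (iii)(3)
    (hiii3 : ∀ x ∈ powerProducts p a, x ≠ 1 → commutator G =
      Subgroup.closure (Set.range (fun i => comm x (b i)) ∪ (Subgroup.center G : Set G)))
    -- (iii)(4)
    (hiii4 : ∀ y ∈ powerProducts p b, y ≠ 1 → commutator G =
      Subgroup.closure (Set.range (fun i => comm (a i) y) ∪ (Subgroup.center G : Set G)))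
    -- (iv)
    (hiv1 : ∀ h' ∈ (commutator G : Set G), h' ∉ Subgroup.center G →
      commSet h' (powerProducts p a) =
        (Subgroup.closure (Set.range (fun i => comm (comm (a ⟨0, hn⟩) (b ⟨0, hn⟩)) (a i))) : Set G) ∧
      commSet h' (powerProducts p b) =
        (Subgroup.closure (Set.range (fun i => comm (comm (a ⟨0, hn⟩) (b ⟨0, hn⟩)) (b i))) : Set G))
    (hiv2 : ∀ x ∈ powerProducts p a, x ≠ 1 → commSet x (commutator G : Set G) =
      (Subgroup.closure (Set.range (fun i => comm (comm (a ⟨0, hn⟩) (b ⟨0, hn⟩)) (a i))) : Set G))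
    (hiv3 : ∀ y ∈ powerProducts p b, y ≠ 1 → commSet y (commutator G : Set G) =
      (Subgroup.closure (Set.range (fun i => comm (comm (a ⟨0, hn⟩) (b ⟨0, hn⟩)) (b i))) : Set G))
    -- (v)
    (hv : ∀ h' ∈ (commutator G : Set G), h' ∉ Subgroup.center G →
      commSet h' Set.univ = (Subgroup.center G : Set G)) :
    ∀ h' ∈ (commutator G : Set G), h' ∉ Subgroup.center G →
      ∀ x ∈ powerProducts p a, ∀ y ∈ powerProducts p b, x * y ≠ 1 →
        ∃ hstar ∈ (commutator G : Set G), h' ∈ commSet (x * y * hstar) Set.univ :=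
  stmt15_general p n hp hn G hclass hct a b hii hiii1a hiii1b hiii2 hiv1 hiv2 hiv3 hv

end Paper
end
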